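/- arXiv:1602.07276 — 2 statements merged into one kernel-verified Lean document; each statement's English description precedes it below -/
import Mathlib

section
/- Let i ∈ I and let α ∈ R be a root not proportional to α_i such that p_{i,α} + q_{i,α} ≥ 2. Then: (1) B(α_i, α_i) ≤ B(β, β) for every root β ∈ R (i.e. α_i is a short root); (2) B(α − q_{i,α}α_i, α − q_{i,α}α_i) = B(α + p_{i,α}α_i, α + p_{i,α}α_i) = (p_{i,α} + q_{i,α})·B(α_i, α_i); and (3) B(α + kα_i, α + kα_i) = B(α_i, α_i) for every integer k with −q_{i,α} < k < p_{i,α}. -/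
open scoped RealInnerProductSpace

/-- A finite, reduced, irreducible, crystallographic root system `R` spanning a
finite-dimensional real inner product space `E`, together with a base of simple
roots indexed by `I`, the integral Cartan pairing `pair`, and for each simple
root `αᵢ` and each root `α` not proportional to `αᵢ` the chain lengths
`p i α`, `q i α` (largest `n ≥ 0` with `α + n αᵢ`, resp. `α - n αᵢ`, a root). -/
structure RootSystemData (E : Type) [NormedAddCommGroup E] [InnerProductSpace ℝ E]
    [FiniteDimensional ℝ E] (I : Type) [Fintype I] : Type where
  R : Set E
  finite : R.Finite
  zero_not_mem : (0 : E) ∉ R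
  spans : Submodule.span ℝ R = ⊤
  neg_mem : ∀ α ∈ R, -α ∈ R
  reduced : ∀ α ∈ R, ∀ r : ℝ, r • α ∈ R → r = 1 ∨ r = -1
  pair : E → E → ℤ
  pair_def : ∀ α ∈ R, ∀ β ∈ R, (pair α β : ℝ) * ⟪α, α⟫ = 2 * ⟪α, β⟫
  reflect_mem : ∀ α ∈ R, ∀ β ∈ R, β - (pair α β : ℝ) • α ∈ R
  irreducible : ∀ R₁ R₂ : Set E, R = R₁ ∪ R₂ →
    (∀ α ∈ R₁, ∀ β ∈ R₂, ⟪α, β⟫ = 0) → R₁ = ∅ ∨ R₂ = ∅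
  simple : I → E
  simple_mem : ∀ i, simple i ∈ R
  simple_indep : LinearIndependent ℝ simple
  simple_gen : ∀ α ∈ R,
    (∃ c : I → ℕ, α = ∑ i, (c i : ℝ) • simple i) ∨
    (∃ c : I → ℕ, α = -(∑ i, (c i : ℝ) • simple i))
  p : I → E → ℕ
  q : I → E → ℕ
  p_mem : ∀ i, ∀ α ∈ R, (∀ r : ℝ, α ≠ r • simple i) →
    ∀ k : ℕ, k ≤ p i α → α + (k : ℝ) • simple i ∈ R
  p_max : ∀ i, ∀ α ∈ R, (∀ r : ℝ, α ≠ r • simple i) →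
    α + ((p i α : ℝ) + 1) • simple i ∉ R
  q_mem : ∀ i, ∀ α ∈ R, (∀ r : ℝ, α ≠ r • simple i) →
    ∀ k : ℕ, k ≤ q i α → α - (k : ℝ) • simple i ∈ R
  q_max : ∀ i, ∀ α ∈ R, (∀ r : ℝ, α ≠ r • simple i) →
    α - ((q i α : ℝ) + 1) • simple i ∉ R

variable {E : Type} [NormedAddCommGroup E] [InnerProductSpace ℝ E]
    [FiniteDimensional ℝ E] {I : Type} [Fintype I]

lemma rs_pos (D : RootSystemData E I) {β : E} (h : β ∈ D.R) : 0 < ⟪β, β⟫ := by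
  have hne : β ≠ 0 := fun h0 => D.zero_not_mem (h0 ▸ h)
  rw [real_inner_self_eq_norm_sq]
  exact pow_pos (norm_pos_iff.2 hne) 2

/-- product of Cartan integers is at most 3 for non-proportional roots -/
lemma rs_nm (D : RootSystemData E I) {δ γ : E} (hδ : δ ∈ D.R) (hγ : γ ∈ D.R)
    (hprop : ∀ r : ℝ, γ ≠ r • δ) : D.pair δ γ * D.pair γ δ ≤ 3 := by
  have hA := rs_pos D hδ
  have hC := rs_pos D hγ
  have h1 := D.pair_def δ hδ γ hγ
  have h2 := D.pair_def γ hγ δ hδ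
  rw [real_inner_comm δ γ] at h2
  by_contra hgt
  push_neg at hgt
  have h4 : (4 : ℤ) ≤ D.pair δ γ * D.pair γ δ := hgt
  have h4' : (4 : ℝ) ≤ (D.pair δ γ : ℝ) * (D.pair γ δ : ℝ) := by exact_mod_cast h4
  have hcs := real_inner_mul_inner_self_le δ γ
  have hmul : ((D.pair δ γ : ℝ) * ⟪δ, δ⟫) * ((D.pair γ δ : ℝ) * ⟪γ, γ⟫)
      = (2 * ⟪δ, γ⟫) * (2 * ⟪δ, γ⟫) := by rw [h1, h2]
  have heq : ⟪δ, γ⟫ * ⟪δ, γ⟫ = ⟪δ, δ⟫ * ⟪γ, γ⟫ :=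
    le_antisymm hcs (by nlinarith [mul_pos hA hC])
  have hδ0 : δ ≠ 0 := fun h0 => D.zero_not_mem (h0 ▸ hδ)
  have hγ0 : γ ≠ 0 := fun h0 => D.zero_not_mem (h0 ▸ hγ)
  have hn : (0:ℝ) < ‖δ‖ * ‖γ‖ := mul_pos (norm_pos_iff.2 hδ0) (norm_pos_iff.2 hγ0)
  have habs : |⟪δ, γ⟫ / (‖δ‖ * ‖γ‖)| = 1 := by
    rw [abs_div, abs_mul, abs_norm, abs_norm, div_eq_one_iff_eq (ne_of_gt hn)]
    rw [← mul_self_inj_of_nonneg (abs_nonneg _) hn.le, abs_mul_abs_self]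
    rw [real_inner_self_eq_norm_mul_norm, real_inner_self_eq_norm_mul_norm] at heq
    linear_combination heq
  obtain ⟨-, r, -, hr⟩ := (abs_real_inner_div_norm_mul_norm_eq_one_iff δ γ).1 habs
  exact hprop r hr

/-- pair is positive when inner product is positive -/
lemma rs_pair_pos (D : RootSystemData E I) {δ γ : E} (hδ : δ ∈ D.R) (hγ : γ ∈ D.R)
    (hpos : 0 < ⟪δ, γ⟫) : 1 ≤ D.pair δ γ := by
  have hA := rs_pos D hδ
  have h1 := D.pair_def δ hδ γ hγ
  have : (0:ℝ) < (D.pair δ γ : ℝ) := by nlinarith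
  have h0 : (0:ℤ) < D.pair δ γ := by exact_mod_cast this
  omega

/-- if roots δ, γ are non-proportional and ⟪δ,γ⟫ > 0 then γ - δ is a root -/
lemma rs_step (D : RootSystemData E I) {δ γ : E} (hδ : δ ∈ D.R) (hγ : γ ∈ D.R)
    (hprop : ∀ r : ℝ, γ ≠ r • δ) (hpos : 0 < ⟪δ, γ⟫) : γ - δ ∈ D.R := by
  have hn := rs_pair_pos D hδ hγ hpos
  have hm := rs_pair_pos D hγ hδ (by rwa [real_inner_comm])
  have hnm := rs_nm D hδ hγ hprop
  have : D.pair δ γ = 1 ∨ D.pair γ δ = 1 := by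
    by_contra h
    push_neg at h
    have h1 : 2 ≤ D.pair δ γ := by omega
    have h2 : 2 ≤ D.pair γ δ := by omega
    nlinarith
  rcases this with h | h
  · have := D.reflect_mem δ hδ γ hγ
    rwa [h, Int.cast_one, one_smul] at this
  · have := D.reflect_mem γ hγ δ hδ
    rw [h, Int.cast_one, one_smul] at this
    have := D.neg_mem _ this
    rwa [neg_sub] at this

/-- pair is negative when inner product is negative -/
lemma rs_pair_neg (D : RootSystemData E I) {δ γ : E} (hδ : δ ∈ D.R) (hγ : γ ∈ D.R)
    (hneg : ⟪δ, γ⟫ < 0) : D.pair δ γ ≤ -1 := by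
  have hA := rs_pos D hδ
  have h1 := D.pair_def δ hδ γ hγ
  have : (D.pair δ γ : ℝ) < 0 := by nlinarith
  have h0 : D.pair δ γ < 0 := by exact_mod_cast this
  omega

/-- every root is non-orthogonal to some root of the same length as β -/
lemma rs_master (D : RootSystemData E I) {β γ : E} (hβ : β ∈ D.R) (hγ : γ ∈ D.R) :
    ∃ δ ∈ D.R, ⟪δ, δ⟫ = ⟪β, β⟫ ∧ ⟪γ, δ⟫ ≠ 0 := by
  classical
  set O : Set E := {δ | δ ∈ D.R ∧ ⟪δ, δ⟫ = ⟪β, β⟫} with hO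
  set R₂ : Set E := {x | x ∈ D.R ∧ ∀ δ ∈ O, ⟪x, δ⟫ = 0} with hR₂
  set R₁ : Set E := D.R \ R₂ with hR₁
  have hcover : D.R = R₁ ∪ R₂ := by
    rw [hR₁, Set.diff_union_of_subset (fun x hx => hx.1)]
  have hmemU : ∀ x ∈ R₁, x ∈ Submodule.span ℝ O := by
    intro x hx
    obtain ⟨hxR, hx2⟩ := hx
    have hex : ∃ δ ∈ O, ⟪x, δ⟫ ≠ 0 := by
      by_contra h
      push_neg at h
      exact hx2 ⟨hxR, h⟩
    obtain ⟨δ, hδO, hne⟩ := hex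
    have hδR := hδO.1
    have hrefl := D.reflect_mem x hxR δ hδR
    have hpd := D.pair_def x hxR δ hδR
    have hnorm : ⟪δ - (D.pair x δ : ℝ) • x, δ - (D.pair x δ : ℝ) • x⟫ = ⟪δ, δ⟫ := by
      rw [real_inner_sub_sub_self, real_inner_smul_right, real_inner_smul_left,
        real_inner_smul_right, real_inner_comm x δ]
      linear_combination (D.pair x δ : ℝ) * hpd
    have hmemO : δ - (D.pair x δ : ℝ) • x ∈ O := ⟨hrefl, by rw [hnorm, hδO.2]⟩
    have h1 : δ ∈ Submodule.span ℝ O := Submodule.subset_span hδO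
    have h2 : δ - (D.pair x δ : ℝ) • x ∈ Submodule.span ℝ O := Submodule.subset_span hmemO
    have h3 : (D.pair x δ : ℝ) • x ∈ Submodule.span ℝ O := by
      have := Submodule.sub_mem _ h1 h2
      simpa using this
    have hpne : (D.pair x δ : ℝ) ≠ 0 := by
      intro h0
      rw [h0] at hpd
      simp at hpd
      exact hne hpd
    have := Submodule.smul_mem (Submodule.span ℝ O) ((D.pair x δ : ℝ)⁻¹) h3
    rwa [smul_smul, inv_mul_cancel₀ hpne, one_smul] at this
  have horth : ∀ x ∈ R₁, ∀ y ∈ R₂, ⟪x, y⟫ = 0 := by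
    intro x hx y hy
    have hxU := hmemU x hx
    have : ∀ z ∈ Submodule.span ℝ O, ⟪z, y⟫ = 0 := by
      intro z hz
      induction hz using Submodule.span_induction with
      | mem w hw => rw [real_inner_comm]; exact hy.2 w hw
      | zero => simp
      | add u v hu hv ihu ihv => rw [inner_add_left, ihu, ihv]; ring
      | smul r u hu ihu => rw [real_inner_smul_left, ihu]; ring
    exact this x hxU
  have hβ1 : β ∈ R₁ := by
    refine ⟨hβ, fun h => ?_⟩
    have := h.2 β ⟨hβ, rfl⟩
    exact (ne_of_gt (rs_pos D hβ)) this
  rcases D.irreducible R₁ R₂ hcover horth with h | h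
  · exact absurd (h ▸ hβ1) (Set.notMem_empty β)
  · have hγ2 : γ ∉ R₂ := by rw [h]; exact Set.notMem_empty γ
    have : ¬ (γ ∈ D.R ∧ ∀ δ ∈ O, ⟪γ, δ⟫ = 0) := hγ2
    push_neg at this
    obtain ⟨δ, hδO, hne⟩ := this hγ
    exact ⟨δ, hδO.1, hδO.2, hne⟩

/-- ratio of squared lengths of non-orthogonal roots -/
lemma rs_ratio (D : RootSystemData E I) {δ γ : E} (hδ : δ ∈ D.R) (hγ : γ ∈ D.R)
    (hs : ⟪δ, γ⟫ ≠ 0) :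
    ⟪γ, γ⟫ = ⟪δ, δ⟫ ∨ ⟪γ, γ⟫ = 2 * ⟪δ, δ⟫ ∨ ⟪γ, γ⟫ = 3 * ⟪δ, δ⟫ ∨
      2 * ⟪γ, γ⟫ = ⟪δ, δ⟫ ∨ 3 * ⟪γ, γ⟫ = ⟪δ, δ⟫ := by
  by_cases hp : ∃ r : ℝ, γ = r • δ
  · obtain ⟨r, rfl⟩ := hp
    rcases D.reduced δ hδ r hγ with h1 | h1 <;>
    · left
      rw [real_inner_smul_left, real_inner_smul_right, h1]
      ring
  · push_neg at hp
    have hnm := rs_nm D hδ hγ hp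
    have h1 := D.pair_def δ hδ γ hγ
    have h2 := D.pair_def γ hγ δ hδ
    rw [real_inner_comm δ γ] at h2
    have hAC : (D.pair γ δ : ℝ) * ⟪γ, γ⟫ = (D.pair δ γ : ℝ) * ⟪δ, δ⟫ := by linarith
    have hA := rs_pos D hδ
    have hC := rs_pos D hγ
    obtain ⟨N, M, hN, hM, hNM, hR⟩ :
        ∃ N M : ℤ, 1 ≤ N ∧ 1 ≤ M ∧ N * M ≤ 3 ∧ (M : ℝ) * ⟪γ, γ⟫ = (N : ℝ) * ⟪δ, δ⟫ := by
      rcases lt_or_gt_of_ne hs with hlt | hgt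
      · have hn := rs_pair_neg D hδ hγ hlt
        have hm := rs_pair_neg D hγ hδ (by rwa [real_inner_comm])
        refine ⟨-(D.pair δ γ), -(D.pair γ δ), by omega, by omega, by nlinarith, ?_⟩
        push_cast
        linarith
      · have hn := rs_pair_pos D hδ hγ hgt
        have hm := rs_pair_pos D hγ hδ (by rwa [real_inner_comm])
        exact ⟨D.pair δ γ, D.pair γ δ, hn, hm, hnm, hAC⟩
    have hN3 : N ≤ 3 := by nlinarith
    have hM3 : M ≤ 3 := by nlinarith
    interval_cases N <;> interval_cases M <;>
      simp only [Int.cast_one, Int.cast_ofNat, Int.cast_two, Int.cast_three] at hR <;>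
      push_cast at hR <;> first
        | (left; linarith)
        | (right; left; linarith)
        | (right; right; left; linarith)
        | (right; right; right; left; linarith)
        | (right; right; right; right; linarith)
        | omega

lemma rs_short_aux {A C : ℝ} (hA : 0 < A) (L : ℝ) (hL : L = 2 ∨ L = 3)
    (r1 : C = A ∨ C = 2 * A ∨ C = 3 * A ∨ 2 * C = A ∨ 3 * C = A)
    (r2 : C = L * A ∨ C = 2 * (L * A) ∨ C = 3 * (L * A) ∨ 2 * C = L * A ∨ 3 * C = L * A) :
    A ≤ C := by
  rcases hL with rfl | rfl <;> rcases r1 with h|h|h|h|h <;> rcases r2 with g|g|g|g|g <;> linarith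

set_option maxHeartbeats 1000000 in
/-- If `p_{i,α} + q_{i,α} ≥ 2` then `αᵢ` is short, both ends of the `αᵢ`-chain
through `α` are long of squared length `(p+q)·B(αᵢ,αᵢ)`, and all interior
members of the chain have the same squared length as `αᵢ`. -/
theorem stmt2 {E : Type} [NormedAddCommGroup E] [InnerProductSpace ℝ E]
    [FiniteDimensional ℝ E] {I : Type} [Fintype I]
    (D : RootSystemData E I) (i : I) (α : E) (hα : α ∈ D.R)
    (hprop : ∀ r : ℝ, α ≠ r • D.simple i)
    (hpq : 2 ≤ D.p i α + D.q i α) :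
    (∀ β ∈ D.R, ⟪D.simple i, D.simple i⟫ ≤ ⟪β, β⟫) ∧
    (⟪α - (D.q i α : ℝ) • D.simple i, α - (D.q i α : ℝ) • D.simple i⟫
        = ⟪α + (D.p i α : ℝ) • D.simple i, α + (D.p i α : ℝ) • D.simple i⟫ ∧
     ⟪α + (D.p i α : ℝ) • D.simple i, α + (D.p i α : ℝ) • D.simple i⟫
        = ((D.p i α : ℝ) + (D.q i α : ℝ)) * ⟪D.simple i, D.simple i⟫) ∧
    (∀ k : ℤ, -(D.q i α : ℤ) < k → k < (D.p i α : ℤ) →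
      ⟪α + (k : ℝ) • D.simple i, α + (k : ℝ) • D.simple i⟫
        = ⟪D.simple i, D.simple i⟫) := by
  have haR := D.simple_mem i
  have hA := rs_pos D haR
  set a := D.simple i with ha'
  set P := D.p i α with hP
  set Q := D.q i α with hQ
  set c := D.pair a α with hc
  set β : ℤ → E := fun k => α + (k : ℝ) • a with hβ
  -- membership of the chain
  have hM : ∀ k : ℤ, -(Q : ℤ) ≤ k → k ≤ (P : ℤ) → β k ∈ D.R := by
    intro k h1 h2
    rcases le_or_gt 0 k with hk | hk
    · have hmem := D.p_mem i α hα hprop k.toNat (by omega)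
      have hcast : ((k.toNat : ℕ) : ℝ) = (k : ℝ) := by
        exact_mod_cast congrArg (Int.cast : ℤ → ℝ) (Int.toNat_of_nonneg hk)
      rw [← ha', hcast] at hmem
      exact hmem
    · have hmem := D.q_mem i α hα hprop (-k).toNat (by omega)
      have hcast : (((-k).toNat : ℕ) : ℝ) = -(k : ℝ) := by
        have := Int.toNat_of_nonneg (by omega : (0:ℤ) ≤ -k)
        exact_mod_cast congrArg (Int.cast : ℤ → ℝ) this
      rw [hcast, ← ha'] at hmem
      simp only [hβ]
      rw [show α + (k : ℝ) • a = α - -(k : ℝ) • a by module]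
      exact hmem
  -- non-proportionality of chain members
  have hpropk : ∀ k : ℤ, ∀ r : ℝ, β k ≠ r • a := by
    intro k r h
    apply hprop (r - (k : ℝ))
    rw [sub_smul]
    simp only [hβ] at h
    rw [← h]
    abel
  -- Cartan pairing along the chain
  have hpairk : ∀ k : ℤ, β k ∈ D.R → D.pair a (β k) = c + 2 * k := by
    intro k hk
    have h1 := D.pair_def a haR _ hk
    have h2 := D.pair_def a haR α hα
    rw [← hc] at h2
    simp only [hβ] at h1
    rw [inner_add_right, real_inner_smul_right] at h1
    have key : ((D.pair a (β k)) : ℝ) * ⟪a, a⟫ = ((c : ℝ) + 2 * (k : ℝ)) * ⟪a, a⟫ := by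
      simp only [hβ]
      linear_combination h1 - h2
    have := mul_right_cancel₀ (ne_of_gt hA) key
    exact_mod_cast this
  -- the endpoints of the chain
  have hβP : β (P : ℤ) ∈ D.R := hM P (by omega) le_rfl
  have hβQ : β (-(Q : ℤ)) ∈ D.R := hM _ le_rfl (by omega)
  -- going down and up the chain
  have hup : ∀ k : ℤ, β k ∈ D.R → 0 < c + 2 * k → β (k - 1) ∈ D.R := by
    intro k hk hpos
    have h1 := D.pair_def a haR _ hk
    rw [hpairk k hk] at h1
    have hip : 0 < ⟪a, β k⟫ := by
      have h0 : (0:ℝ) < ((c + 2 * k : ℤ) : ℝ) := by exact_mod_cast hpos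
      nlinarith
    have hmem := rs_step D haR hk (hpropk k) hip
    have he : β k - a = β (k - 1) := by
      simp only [hβ]; push_cast; module
    rwa [he] at hmem
  have hdown : ∀ k : ℤ, β k ∈ D.R → c + 2 * k < 0 → β (k + 1) ∈ D.R := by
    intro k hk hneg
    have h1 := D.pair_def a haR _ hk
    rw [hpairk k hk] at h1
    have hip : ⟪a, β k⟫ < 0 := by
      have h0 : ((c + 2 * k : ℤ) : ℝ) < 0 := by exact_mod_cast hneg
      nlinarith
    have hnk := D.neg_mem _ hk
    have hipn : 0 < ⟪a, -(β k)⟫ := by rw [inner_neg_right]; linarith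
    have hpn : ∀ r : ℝ, -(β k) ≠ r • a := by
      intro r h
      apply hpropk k (-r)
      rw [neg_smul, ← h, neg_neg]
    have hmem := D.neg_mem _ (rs_step D haR hnk hpn hipn)
    have he : -(-(β k) - a) = β (k + 1) := by
      simp only [hβ]; push_cast; module
    rwa [he] at hmem
  -- sign conditions at the ends
  have htop : 0 ≤ c + 2 * (P : ℤ) := by
    by_contra h
    push_neg at h
    have hmem := hdown (P : ℤ) hβP (by omega)
    apply D.p_max i α hα hprop
    have he : β ((P : ℤ) + 1) = α + ((D.p i α : ℝ) + 1) • D.simple i := by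
      simp only [hβ]; rw [← ha', ← hP]; push_cast; module
    rwa [he] at hmem
  have hbot : c - 2 * (Q : ℤ) ≤ 0 := by
    by_contra h
    push_neg at h
    have hmem := hup (-(Q : ℤ)) hβQ (by omega)
    apply D.q_max i α hα hprop
    have he : β (-(Q : ℤ) - 1) = α - ((D.q i α : ℝ) + 1) • D.simple i := by
      simp only [hβ]; rw [← ha', ← hQ]; push_cast; module
    rwa [he] at hmem
  -- the chain is unbroken: no roots beyond the ends
  have habove : ∀ k : ℤ, (P : ℤ) < k → β k ∉ D.R := by
    have hstep : ∀ n : ℕ, β ((P : ℤ) + 1 + n) ∉ D.R := by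
      intro n
      induction n with
      | zero =>
        intro hmem
        apply D.p_max i α hα hprop
        have he : β ((P : ℤ) + 1 + (0 : ℕ)) = α + ((D.p i α : ℝ) + 1) • D.simple i := by
          simp only [hβ]; rw [← ha', ← hP]; push_cast; module
        rwa [he] at hmem
      | succ n ih =>
        intro hmem
        apply ih
        have hmem' := hup ((P : ℤ) + 1 + ((n : ℤ) + 1)) (by
            have he : ((P : ℤ) + 1 + ((n + 1 : ℕ) : ℤ)) = ((P : ℤ) + 1 + ((n : ℤ) + 1)) := by
              push_cast; ring
            rwa [he] at hmem) (by omega)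
        have he : ((P : ℤ) + 1 + ((n : ℤ) + 1)) - 1 = (P : ℤ) + 1 + (n : ℕ) := by push_cast; ring
        rwa [he] at hmem'
    intro k hk hmem
    have he : k = (P : ℤ) + 1 + ((k - P - 1).toNat : ℤ) := by omega
    exact hstep (k - P - 1).toNat (by rwa [← he])
  have hbelow : ∀ k : ℤ, k < -(Q : ℤ) → β k ∉ D.R := by
    have hstep : ∀ n : ℕ, β (-(Q : ℤ) - 1 - n) ∉ D.R := by
      intro n
      induction n with
      | zero =>
        intro hmem
        apply D.q_max i α hα hprop
        have he : β (-(Q : ℤ) - 1 - (0 : ℕ)) = α - ((D.q i α : ℝ) + 1) • D.simple i := by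
          simp only [hβ]; rw [← ha', ← hQ]; push_cast; module
        rwa [he] at hmem
      | succ n ih =>
        intro hmem
        apply ih
        have hmem' := hdown (-(Q : ℤ) - 1 - ((n : ℤ) + 1)) (by
            have he : (-(Q : ℤ) - 1 - ((n + 1 : ℕ) : ℤ)) = (-(Q : ℤ) - 1 - ((n : ℤ) + 1)) := by
              push_cast; ring
            rwa [he] at hmem) (by omega)
        have he : (-(Q : ℤ) - 1 - ((n : ℤ) + 1)) + 1 = -(Q : ℤ) - 1 - (n : ℕ) := by push_cast; ring
        rwa [he] at hmem'
    intro k hk hmem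
    have he : k = -(Q : ℤ) - 1 - ((-(Q:ℤ) - 1 - k).toNat : ℤ) := by omega
    exact hstep _ (by rwa [← he])
  -- reflection symmetry and c = Q - P
  have hrefl : ∀ k : ℤ, β k ∈ D.R → β (-c - k) ∈ D.R := by
    intro k hk
    have hmem := D.reflect_mem a haR _ hk
    rw [hpairk k hk] at hmem
    have he : β k - ((c + 2 * k : ℤ) : ℝ) • a = β (-c - k) := by
      simp only [hβ]; push_cast; module
    rwa [he] at hmem
  have hceq : c = (Q : ℤ) - (P : ℤ) := by
    have h1 := hrefl (P : ℤ) hβP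
    have h2 := hrefl (-(Q : ℤ)) hβQ
    have e1 : -(Q : ℤ) ≤ -c - P := by
      by_contra h
      push_neg at h
      exact hbelow _ (by omega) h1
    have e2 : -c - -(Q : ℤ) ≤ (P : ℤ) := by
      by_contra h
      push_neg at h
      exact habove _ (by omega) h2
    omega
  have hPQ2 : 2 ≤ (P : ℤ) + Q := by exact_mod_cast hpq
  -- pairings at the endpoints
  have hnP : D.pair a (β (P : ℤ)) = (P : ℤ) + Q := by rw [hpairk _ hβP, hceq]; ring
  have hnQ : D.pair a (β (-(Q : ℤ))) = -((P : ℤ) + Q) := by rw [hpairk _ hβQ, hceq]; ring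
  -- squared lengths at the endpoints
  have hipP : 0 < ⟪a, β (P : ℤ)⟫ := by
    have h1 := D.pair_def a haR _ hβP
    rw [hnP] at h1
    have h0 : (0:ℝ) < (((P : ℤ) + Q : ℤ) : ℝ) := by exact_mod_cast (by omega : (0:ℤ) < (P:ℤ)+Q)
    nlinarith
  have hmP : D.pair (β (P : ℤ)) a = 1 := by
    have hm := rs_pair_pos D hβP haR (by rwa [real_inner_comm])
    have hnm := rs_nm D haR hβP (hpropk _)
    rw [hnP] at hnm
    nlinarith
  have hPQ3 : (P : ℤ) + Q ≤ 3 := by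
    have hnm := rs_nm D haR hβP (hpropk _)
    rw [hnP, hmP, mul_one] at hnm
    exact hnm
  have hnormP : ⟪β (P : ℤ), β (P : ℤ)⟫ = (((P : ℤ) + Q : ℤ) : ℝ) * ⟪a, a⟫ := by
    have h1 := D.pair_def a haR _ hβP
    rw [hnP] at h1
    have h2 := D.pair_def (β (P : ℤ)) hβP a haR
    rw [hmP, real_inner_comm a (β (P : ℤ))] at h2
    push_cast at h1 ⊢
    push_cast at h2
    linarith
  have hipQ : ⟪a, β (-(Q : ℤ))⟫ < 0 := by
    have h1 := D.pair_def a haR _ hβQ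
    rw [hnQ] at h1
    have h0 : ((-((P : ℤ) + Q) : ℤ) : ℝ) < 0 := by exact_mod_cast (by omega : (-((P:ℤ)+Q) : ℤ) < 0)
    nlinarith
  have hmQ : D.pair (β (-(Q : ℤ))) a = -1 := by
    have hm := rs_pair_neg D hβQ haR (by rwa [real_inner_comm])
    have hnm := rs_nm D haR hβQ (hpropk _)
    rw [hnQ] at hnm
    nlinarith
  have hnormQ : ⟪β (-(Q : ℤ)), β (-(Q : ℤ))⟫ = (((P : ℤ) + Q : ℤ) : ℝ) * ⟪a, a⟫ := by
    have h1 := D.pair_def a haR _ hβQ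
    rw [hnQ] at h1
    have h2 := D.pair_def (β (-(Q : ℤ))) hβQ a haR
    rw [hmQ, real_inner_comm a (β (-(Q : ℤ)))] at h2
    push_cast at h1 ⊢
    push_cast at h2
    linarith
  -- general norm computations
  have h2aα : 2 * ⟪a, α⟫ = ((Q : ℝ) - (P : ℝ)) * ⟪a, a⟫ := by
    have h2 := D.pair_def a haR α hα
    rw [← hc, hceq] at h2
    push_cast at h2
    linarith
  have hexpand : ∀ t : ℝ, ⟪α + t • a, α + t • a⟫
      = ⟪α, α⟫ + 2 * t * ⟪a, α⟫ + t ^ 2 * ⟪a, a⟫ := by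
    intro t
    rw [real_inner_add_add_self, real_inner_smul_right, real_inner_smul_left,
      real_inner_smul_right, real_inner_comm α a]
    ring
  have hαα : ⟪α, α⟫ = ((P : ℝ) + (Q : ℝ) - (P : ℝ) * (Q : ℝ)) * ⟪a, a⟫ := by
    have h := hnormP
    simp only [hβ] at h
    rw [hexpand] at h
    push_cast at h
    linear_combination h - (P : ℝ) * h2aα
  refine ⟨?_, ⟨?_, ?_⟩, ?_⟩
  · -- αᵢ is short
    intro γ hγ
    obtain ⟨δ1, hδ1R, hδ1n, hδ1ne⟩ := rs_master D haR hγ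
    obtain ⟨δ2, hδ2R, hδ2n, hδ2ne⟩ := rs_master D hβP hγ
    have r1 := rs_ratio D hδ1R hγ (by rwa [real_inner_comm])
    have r2 := rs_ratio D hδ2R hγ (by rwa [real_inner_comm])
    rw [hδ1n] at r1
    rw [hδ2n, hnormP] at r2
    have hL : (((P : ℤ) + Q : ℤ) : ℝ) = 2 ∨ (((P : ℤ) + Q : ℤ) : ℝ) = 3 := by
      rcases (by omega : (P : ℤ) + Q = 2 ∨ (P : ℤ) + Q = 3) with h | h <;>
        [left; right] <;> rw [h] <;> norm_num
    exact rs_short_aux hA _ hL r1 r2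
  · -- the two ends have the same length
    have e1 : α - (D.q i α : ℝ) • D.simple i = β (-(Q : ℤ)) := by
      simp only [hβ]; rw [← ha', ← hQ]; push_cast; module
    have e2 : α + (D.p i α : ℝ) • D.simple i = β ((P : ℤ)) := by
      simp only [hβ]; rw [← ha', ← hP]; push_cast; module
    rw [e1, e2, hnormP, hnormQ]
  · -- the squared length of the ends
    have e2 : α + (D.p i α : ℝ) • D.simple i = β ((P : ℤ)) := by
      simp only [hβ]; rw [← ha', ← hP]; push_cast; module
    rw [e2, hnormP]
    push_cast
    ring
  · -- interior members have the same length as αᵢ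
    intro k hk1 hk2
    have hid : (k + (Q : ℤ)) * ((P : ℤ) - k) = (P : ℤ) + Q - 1 := by
      have h23 : (P : ℤ) + Q = 2 ∨ (P : ℤ) + Q = 3 := by omega
      rcases h23 with h | h
      · obtain ⟨e1, e2⟩ : k + (Q : ℤ) = 1 ∧ (P : ℤ) - k = 1 := by omega
        rw [e1, e2, h]; norm_num
      · rcases (by omega : (k + (Q : ℤ) = 1 ∧ (P : ℤ) - k = 2) ∨ (k + (Q : ℤ) = 2 ∧ (P : ℤ) - k = 1))
          with ⟨e1, e2⟩ | ⟨e1, e2⟩ <;> rw [e1, e2, h] <;> norm_num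
    have hscal : ((P : ℝ) + (Q : ℝ) - (P : ℝ) * (Q : ℝ)) + (k : ℝ) * ((Q : ℝ) - (P : ℝ))
        + (k : ℝ) ^ 2 = 1 := by
      have hz : ((P : ℤ) + Q - P * Q) + k * ((Q : ℤ) - (P : ℤ)) + k ^ 2 = 1 := by
        linear_combination -hid
      exact_mod_cast hz
    rw [hexpand (k : ℝ)]
    linear_combination hαα + (k : ℝ) * h2aα + hscal * ⟪a, a⟫
end

section
/- Powers of E_i act on the basis of V as follows. For i ∈ I, a root α not proportional to α_i, and an integer k ≥ 1: if k ≤ p_{i,α} then E_i^k X_α = ([q_{i,α}+k]_i!/[q_{i,α}]_i!)·X_{α+kα_i}, while if k > p_{i,α} then E_i^k X_α = 0. Moreover E_i^k X_{α_i} = 0 for all k ≥ 1; E_i² X_{−α_i} = [2]_i X_{α_i} and E_i^k X_{−α_i} = 0 for all k ≥ 3; and E_i^k t_j = 0 for all j ∈ I and k ≥ 2. -/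
open scoped RealInnerProductSpace

noncomputable section

/-- The field `ℚ(v)` of rational functions in one variable `v` over `ℚ`. -/
abbrev K : Type := RatFunc ℚ

/-- The variable `v` of `ℚ(v)`. -/
def qv : K := RatFunc.X

/-- The quantum integer `[n]ᵢ = (vᵢⁿ - vᵢ⁻ⁿ)/(vᵢ - vᵢ⁻¹)` where `vᵢ = v^d`. -/
def qnum (d : ℕ) (n : ℤ) : K :=
  ((qv ^ d) ^ n - (qv ^ d) ^ (-n)) / (qv ^ d - (qv ^ d)⁻¹)

/-- The quantum factorial `[n]ᵢ! = ∏_{s=1}^n [s]ᵢ` where `vᵢ = v^d`. -/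
def qfact (d : ℕ) (n : ℕ) : K := ∏ s ∈ Finset.range n, qnum d ((s : ℤ) + 1)

variable {E : Type} [NormedAddCommGroup E] [InnerProductSpace ℝ E]
  [FiniteDimensional ℝ E] {I : Type} [Fintype I]

/-- The `ℚ(v)`-vector space `V` with basis `{X_α : α ∈ R} ∪ {t_i : i ∈ I}`. -/
abbrev VV (D : RootSystemData E I) : Type := ({x : E // x ∈ D.R} ⊕ I) →₀ K

/-- The basis vector `X_α` of `V`, for a root `α`. -/
def XX (D : RootSystemData E I) (a : {x : E // x ∈ D.R}) : VV D :=
  Finsupp.single (Sum.inl a) 1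

/-- The basis vector `t_j` of `V`, for `j ∈ I`. -/
def tv (D : RootSystemData E I) (j : I) : VV D :=
  Finsupp.single (Sum.inr j) 1

open Classical in
/-- The operator `E_i` on `V`:  `E_i X_α = [q_{i,α}+1]ᵢ X_{α+αᵢ}` if `α+αᵢ ∈ R`,
`E_i X_{-αᵢ} = tᵢ`, `E_i X_α = 0` otherwise, and
`E_i t_j = [|⟨αⱼ∨,αᵢ⟩|]ⱼ X_{αᵢ}`. -/
def Eop (D : RootSystemData E I) (d : I → ℕ) (i : I) : VV D →ₗ[K] VV D :=
  Finsupp.lift (VV D) K _ fun b =>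
    match b with
    | Sum.inl a =>
        if h : (a : E) + D.simple i ∈ D.R then
          qnum (d i) ((D.q i (a : E) : ℤ) + 1) • XX D ⟨(a : E) + D.simple i, h⟩
        else if (a : E) = -(D.simple i) then tv D i
        else 0
    | Sum.inr j =>
        qnum (d j) |D.pair (D.simple j) (D.simple i)| •
          XX D ⟨D.simple i, D.simple_mem i⟩

open Classical in
/-- The operator `F_i` on `V`:  `F_i X_α = [p_{i,α}+1]ᵢ X_{α-αᵢ}` if `α-αᵢ ∈ R`,
`F_i X_{αᵢ} = tᵢ`, `F_i X_α = 0` otherwise, and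
`F_i t_j = [|⟨αⱼ∨,αᵢ⟩|]ⱼ X_{-αᵢ}`. -/
def Fop (D : RootSystemData E I) (d : I → ℕ) (i : I) : VV D →ₗ[K] VV D :=
  Finsupp.lift (VV D) K _ fun b =>
    match b with
    | Sum.inl a =>
        if h : (a : E) - D.simple i ∈ D.R then
          qnum (d i) ((D.p i (a : E) : ℤ) + 1) • XX D ⟨(a : E) - D.simple i, h⟩
        else if (a : E) = D.simple i then tv D i
        else 0
    | Sum.inr j =>
        qnum (d j) |D.pair (D.simple j) (D.simple i)| •
          XX D ⟨-(D.simple i), D.neg_mem (D.simple i) (D.simple_mem i)⟩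

/-! Along the `αᵢ`-string through `α`, which is unbroken from `α - q αᵢ` to `α + p αᵢ`, the
value of `q` grows by one at each step, so `E_i` multiplies `X_{α + s αᵢ}` by `[q + s + 1]ᵢ`;
the product of these is the ratio of quantum factorials, and the string stops at `α + p αᵢ`.
For the simple root itself, `E_i` sends `X_{-αᵢ} ↦ tᵢ ↦ [2]ᵢ X_{αᵢ} ↦ 0`, because
`⟨αᵢ∨, αᵢ⟩ = 2` and `2αᵢ` is not a root; every `t_j` is sent to a multiple of `X_{αᵢ}`. -/

theorem qv_zpow_injective : Function.Injective fun m : ℤ => qv ^ m := by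
  classical
  intro m n h
  simpa [qv] using congrArg (RatFunc.inftyValuation ℚ) h

theorem qv_pow_zpow_sub_zpow_neg_ne_zero {d : ℕ} (hd : d ≠ 0) {n : ℤ} (hn : n ≠ 0) :
    (qv ^ d) ^ n - (qv ^ d) ^ (-n) ≠ 0 := by
  rw [sub_ne_zero, ← zpow_natCast, ← zpow_mul, ← zpow_mul]
  intro h
  have h2 : (d : ℤ) * n = 0 := by linarith [mul_neg (d : ℤ) n, qv_zpow_injective h]
  exact mul_ne_zero (Int.natCast_ne_zero.2 hd) hn h2

theorem qnum_ne_zero {d : ℕ} (hd : d ≠ 0) {n : ℤ} (hn : n ≠ 0) : qnum d n ≠ 0 := by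
  refine div_ne_zero (qv_pow_zpow_sub_zpow_neg_ne_zero hd hn) ?_
  simpa using qv_pow_zpow_sub_zpow_neg_ne_zero hd one_ne_zero

theorem qfact_ne_zero {d : ℕ} (hd : d ≠ 0) (n : ℕ) : qfact d n ≠ 0 :=
  Finset.prod_ne_zero_iff.2 fun _ _ => qnum_ne_zero hd (by omega)

theorem qfact_add_div_qfact {d : ℕ} (hd : d ≠ 0) (q k : ℕ) :
    qfact d (q + k) / qfact d q = ∏ s ∈ Finset.range k, qnum d ((q : ℤ) + s + 1) := by
  rw [qfact, Finset.prod_range_add, ← qfact, mul_div_cancel_left₀ _ (qfact_ne_zero hd q)]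
  simp only [Nat.cast_add, add_assoc]

namespace RootSystemData

variable (D : RootSystemData E I) {i : I} {α : E}

theorem add_self_not_mem (hα : α ∈ D.R) : α + α ∉ D.R := by
  intro h
  rw [← two_smul ℝ] at h
  rcases D.reduced α hα 2 h with h2 | h2 <;> norm_num at h2

theorem ne_neg_self (hα : α ∈ D.R) : α ≠ -α := by
  intro h
  have h2 : (2 : ℝ) • α = 0 := by rw [two_smul]; nth_rewrite 2 [h]; exact add_neg_cancel α
  exact D.zero_not_mem ((smul_eq_zero.1 h2).resolve_left two_ne_zero ▸ hα)

theorem pair_self (hα : α ∈ D.R) : D.pair α α = 2 := by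
  have hαα : ⟪α, α⟫ ≠ 0 := inner_self_ne_zero.2 fun h => D.zero_not_mem (h ▸ hα)
  exact_mod_cast mul_right_cancel₀ hαα (D.pair_def α hα α hα)

theorem add_smul_simple_ne_smul_simple (hnp : ∀ r : ℝ, α ≠ r • D.simple i) (c : ℝ) :
    ∀ r : ℝ, α + c • D.simple i ≠ r • D.simple i := fun r h =>
  hnp (r - c) (by rw [sub_smul, ← h, add_sub_cancel_right])

theorem q_eq_of_sub_smul_simple_mem {β : E} (hβ : β ∈ D.R) (hnp : ∀ r : ℝ, β ≠ r • D.simple i)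
    {n : ℕ} (hmem : ∀ m ≤ n, β - (m : ℝ) • D.simple i ∈ D.R)
    (hnot : β - ((n : ℝ) + 1) • D.simple i ∉ D.R) : D.q i β = n := by
  refine le_antisymm ?_ ?_
  · by_contra! h
    exact hnot (by exact_mod_cast D.q_mem i β hβ hnp (n + 1) h)
  · by_contra! h
    exact D.q_max i β hβ hnp (by exact_mod_cast hmem (D.q i β + 1) h)

theorem q_add_smul_simple (hα : α ∈ D.R) (hnp : ∀ r : ℝ, α ≠ r • D.simple i) {k : ℕ}
    (hk : k ≤ D.p i α) : D.q i (α + (k : ℝ) • D.simple i) = D.q i α + k := by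
  refine D.q_eq_of_sub_smul_simple_mem (D.p_mem i α hα hnp k hk)
    (D.add_smul_simple_ne_smul_simple hnp k) (fun m hm => ?_) ?_
  · rcases le_total m k with h | h
    · convert D.p_mem i α hα hnp (k - m) (by omega) using 1
      rw [Nat.cast_sub h]; module
    · convert D.q_mem i α hα hnp (m - k) (by omega) using 1
      rw [Nat.cast_sub h]; module
  · convert D.q_max i α hα hnp using 2
    push_cast; module

end RootSystemData

section Eop

variable (D : RootSystemData E I) (d : I → ℕ) (i : I) {α : E}

open Classical in
theorem Eop_XX (hα : α ∈ D.R) :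
    Eop D d i (XX D ⟨α, hα⟩) =
      if h : α + D.simple i ∈ D.R then
        qnum (d i) ((D.q i α : ℤ) + 1) • XX D ⟨α + D.simple i, h⟩
      else if α = -(D.simple i) then tv D i
      else 0 := by
  simp [Eop, XX, Finsupp.lift_apply, Finsupp.sum_single_index]

theorem Eop_tv (j : I) :
    Eop D d i (tv D j) =
      qnum (d j) |D.pair (D.simple j) (D.simple i)| • XX D ⟨D.simple i, D.simple_mem i⟩ := by
  simp [Eop, tv, Finsupp.lift_apply, Finsupp.sum_single_index]

theorem Eop_XX_of_add_mem (hα : α ∈ D.R) (h : α + D.simple i ∈ D.R) :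
    Eop D d i (XX D ⟨α, hα⟩) = qnum (d i) ((D.q i α : ℤ) + 1) • XX D ⟨α + D.simple i, h⟩ := by
  rw [Eop_XX, dif_pos h]

theorem Eop_XX_of_add_not_mem (hα : α ∈ D.R) (h : α + D.simple i ∉ D.R)
    (hne : α ≠ -D.simple i) : Eop D d i (XX D ⟨α, hα⟩) = 0 := by
  rw [Eop_XX, dif_neg h, if_neg hne]

theorem Eop_XX_neg_simple :
    Eop D d i (XX D ⟨-D.simple i, D.neg_mem _ (D.simple_mem i)⟩) = tv D i := by
  rw [Eop_XX, dif_neg (by rw [neg_add_cancel]; exact D.zero_not_mem), if_pos rfl]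

theorem Eop_XX_simple : Eop D d i (XX D ⟨D.simple i, D.simple_mem i⟩) = 0 :=
  Eop_XX_of_add_not_mem D d i _ (D.add_self_not_mem (D.simple_mem i))
    (D.ne_neg_self (D.simple_mem i))

theorem Eop_pow_XX_of_le (hα : α ∈ D.R) (hnp : ∀ r : ℝ, α ≠ r • D.simple i) {k : ℕ}
    (hk : k ≤ D.p i α) :
    (Eop D d i ^ k) (XX D ⟨α, hα⟩) =
      (∏ s ∈ Finset.range k, qnum (d i) ((D.q i α : ℤ) + s + 1)) •
        XX D ⟨α + (k : ℝ) • D.simple i, D.p_mem i α hα hnp k hk⟩ := by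
  induction k with
  | zero => simp
  | succ k ih =>
    have hmem : α + (k : ℝ) • D.simple i + D.simple i ∈ D.R := by
      convert D.p_mem i α hα hnp (k + 1) hk using 1
      push_cast; module
    rw [pow_succ', Module.End.mul_apply, ih (by omega), map_smul,
      Eop_XX_of_add_mem D d i _ hmem, smul_smul, Finset.prod_range_succ,
      D.q_add_smul_simple hα hnp (by omega)]
    congr 2
    exact Subtype.ext (by push_cast; module)

theorem Eop_pow_XX_of_lt (hα : α ∈ D.R) (hnp : ∀ r : ℝ, α ≠ r • D.simple i) {k : ℕ}
    (hk : D.p i α < k) : (Eop D d i ^ k) (XX D ⟨α, hα⟩) = 0 := by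
  refine Module.End.pow_map_zero_of_le hk ?_
  have hnot : α + (D.p i α : ℝ) • D.simple i + D.simple i ∉ D.R := by
    convert D.p_max i α hα hnp using 2
    module
  rw [pow_succ', Module.End.mul_apply, Eop_pow_XX_of_le D d i hα hnp le_rfl, map_smul,
    Eop_XX_of_add_not_mem D d i _ hnot, smul_zero]
  exact fun h => D.add_smul_simple_ne_smul_simple hnp _ (-1) (by rw [h, neg_one_smul])

end Eop

theorem stmt13_general {E : Type} [NormedAddCommGroup E] [InnerProductSpace ℝ E]
    [FiniteDimensional ℝ E] {I : Type} [Fintype I]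
    (D : RootSystemData E I) (d : I → ℕ)
    (hd123 : ∀ i, d i = 1 ∨ d i = 2 ∨ d i = 3)
    (i : I) :
    (∀ a : {x : E // x ∈ D.R}, (∀ r : ℝ, (a : E) ≠ r • D.simple i) →
      ∀ k : ℕ, 1 ≤ k →
        (k ≤ D.p i (a : E) →
          ∀ h : (a : E) + (k : ℝ) • D.simple i ∈ D.R,
            (Eop D d i ^ k) (XX D a)
              = (qfact (d i) (D.q i (a : E) + k) / qfact (d i) (D.q i (a : E))) •
                  XX D ⟨(a : E) + (k : ℝ) • D.simple i, h⟩) ∧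
        (D.p i (a : E) < k → (Eop D d i ^ k) (XX D a) = 0)) ∧
    (∀ k : ℕ, 1 ≤ k →
      (Eop D d i ^ k) (XX D ⟨D.simple i, D.simple_mem i⟩) = 0) ∧
    ((Eop D d i ^ 2) (XX D ⟨-(D.simple i), D.neg_mem (D.simple i) (D.simple_mem i)⟩)
        = qnum (d i) 2 • XX D ⟨D.simple i, D.simple_mem i⟩) ∧
    (∀ k : ℕ, 3 ≤ k →
      (Eop D d i ^ k) (XX D ⟨-(D.simple i), D.neg_mem (D.simple i) (D.simple_mem i)⟩) = 0) ∧
    (∀ j : I, ∀ k : ℕ, 2 ≤ k → (Eop D d i ^ k) (tv D j) = 0) := by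
  have hd0 : d i ≠ 0 := by rcases hd123 i with h | h | h <;> omega
  have hE2 : (Eop D d i ^ 2) (XX D ⟨-(D.simple i), D.neg_mem _ (D.simple_mem i)⟩)
      = qnum (d i) 2 • XX D ⟨D.simple i, D.simple_mem i⟩ := by
    rw [sq, Module.End.mul_apply, Eop_XX_neg_simple, Eop_tv, D.pair_self (D.simple_mem i), abs_two]
  refine ⟨fun a hnp k _ => ⟨fun hk _ => ?_, Eop_pow_XX_of_lt D d i a.2 hnp⟩,
    fun k hk => Module.End.pow_map_zero_of_le hk (by rw [pow_one]; exact Eop_XX_simple D d i),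
    hE2, fun k hk => Module.End.pow_map_zero_of_le hk ?_,
    fun j k hk => Module.End.pow_map_zero_of_le hk ?_⟩
  · rw [qfact_add_div_qfact hd0]
    exact Eop_pow_XX_of_le D d i a.2 hnp hk
  · rw [pow_succ', Module.End.mul_apply, hE2, map_smul, Eop_XX_simple, smul_zero]
  · rw [sq, Module.End.mul_apply, Eop_tv, map_smul, Eop_XX_simple, smul_zero]

/-- Action of powers of `E_i` on the basis of `V`: on `X_α` (`α` not
proportional to `αᵢ`) the `k`-th power gives `([q+k]ᵢ!/[q]ᵢ!)X_{α+kαᵢ}` for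
`k ≤ p_{i,α}` and `0` for `k > p_{i,α}`; `E_i^k X_{αᵢ} = 0` for `k ≥ 1`;
`E_i² X_{-αᵢ} = [2]ᵢ X_{αᵢ}` and `E_i^k X_{-αᵢ} = 0` for `k ≥ 3`;
`E_i^k t_j = 0` for `k ≥ 2`. -/
theorem stmt13 {E : Type} [NormedAddCommGroup E] [InnerProductSpace ℝ E]
    [FiniteDimensional ℝ E] {I : Type} [Fintype I]
    (D : RootSystemData E I) (d : I → ℕ)
    (hd : ∀ i, 2 * (d i : ℝ) = ⟪D.simple i, D.simple i⟫)
    (hd123 : ∀ i, d i = 1 ∨ d i = 2 ∨ d i = 3)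
    (hnorm : ∀ β ∈ D.R, (2 : ℝ) ≤ ⟪β, β⟫)
    (i : I) :
    (∀ a : {x : E // x ∈ D.R}, (∀ r : ℝ, (a : E) ≠ r • D.simple i) →
      ∀ k : ℕ, 1 ≤ k →
        (k ≤ D.p i (a : E) →
          ∀ h : (a : E) + (k : ℝ) • D.simple i ∈ D.R,
            (Eop D d i ^ k) (XX D a)
              = (qfact (d i) (D.q i (a : E) + k) / qfact (d i) (D.q i (a : E))) •
                  XX D ⟨(a : E) + (k : ℝ) • D.simple i, h⟩) ∧
        (D.p i (a : E) < k → (Eop D d i ^ k) (XX D a) = 0)) ∧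
    (∀ k : ℕ, 1 ≤ k →
      (Eop D d i ^ k) (XX D ⟨D.simple i, D.simple_mem i⟩) = 0) ∧
    ((Eop D d i ^ 2) (XX D ⟨-(D.simple i), D.neg_mem (D.simple i) (D.simple_mem i)⟩)
        = qnum (d i) 2 • XX D ⟨D.simple i, D.simple_mem i⟩) ∧
    (∀ k : ℕ, 3 ≤ k →
      (Eop D d i ^ k) (XX D ⟨-(D.simple i), D.neg_mem (D.simple i) (D.simple_mem i)⟩) = 0) ∧
    (∀ j : I, ∀ k : ℕ, 2 ≤ k → (Eop D d i ^ k) (tv D j) = 0) :=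
  stmt13_general D d hd123 i
end
end
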